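/- The stable 1-WL color of a node in a finite graph determines the isomorphism type of its infinite unfolding tree: two nodes (possibly in different finite graphs of at most N nodes each) have equal stable WL colors computed with a common injective hash family if and only if their infinite unfolding trees are equal. -/
import Mathlib


/-- Attributed unfolding trees of depth `d`. -/
def UT (A : Type) : ℕ → Type
  | 0 => A
  | d+1 => A × Multiset (A × UT A d)

/-- A finite attributed undirected graph on node type `V`. -/
structure FinGraph (V A : Type) where
  nbr : V → Finset V
  attr : V → A
  eattr : V → V → A

def FinGraph.Undirected {V A : Type} (g : FinGraph V A) : Prop :=
  (∀ u v, u ∈ g.nbr v ↔ v ∈ g.nbr u) ∧ (∀ u v, g.eattr u v = g.eattr v u)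

/-- Depth-`d` unfolding tree of node `v`. -/
def FinGraph.ut {V A : Type} (g : FinGraph V A) : (d : ℕ) → V → UT A d
  | 0, v => g.attr v
  | d+1, v => (g.attr v, (g.nbr v).val.map fun u => (g.eattr v u, g.ut d u))

/-- 1-WL color refinement with hash functions `h0` and `h`. -/
def FinGraph.wl {V A C : Type} (g : FinGraph V A)
    (h0 : A → C) (h : C × Multiset (A × C) → C) : ℕ → V → C
  | 0, v => h0 (g.attr v)
  | j+1, v => h (g.wl h0 h j v, (g.nbr v).val.map fun u => (g.eattr v u, g.wl h0 h j u))

/-- Disjoint union of two attributed graphs. -/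
def FinGraph.dunion {V1 V2 A : Type} [Inhabited A]
    (g1 : FinGraph V1 A) (g2 : FinGraph V2 A) : FinGraph (V1 ⊕ V2) A where
  nbr := fun x => match x with
    | .inl v => (g1.nbr v).map ⟨Sum.inl, Sum.inl_injective⟩
    | .inr v => (g2.nbr v).map ⟨Sum.inr, Sum.inr_injective⟩
  attr := Sum.elim g1.attr g2.attr
  eattr := fun x y => match x, y with
    | .inl u, .inl v => g1.eattr u v
    | .inr u, .inr v => g2.eattr u v
    | _, _ => default

def UT.trunc {A : Type} : (d : ℕ) → UT A (d+1) → UT A d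
  | 0, t => t.1
  | d+1, t => (t.1, t.2.map fun p => (p.1, UT.trunc d p.2))

lemma UT.trunc_fst {A : Type} (d : ℕ) (t1 t2 : UT A (d+1))
    (h : UT.trunc d t1 = UT.trunc d t2) : t1.1 = t2.1 := by
  cases d with
  | zero => exact h
  | succ d =>
    exact congrArg (Prod.fst : A × Multiset (A × UT A d) → A) h

lemma trunc_ut {V A : Type} (g : FinGraph V A) : ∀ (d : ℕ) (v : V),
    UT.trunc d (g.ut (d+1) v) = g.ut d v := by
  intro d
  induction d with
  | zero => intro v; rfl
  | succ d ih =>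
    intro v
    show (g.attr v, Multiset.map _ (Multiset.map _ (g.nbr v).val)) = _
    rw [Multiset.map_map]
    simp only [FinGraph.ut, Function.comp]
    congr 1
    exact Multiset.map_congr rfl fun u _ => by
      show (g.eattr v u, UT.trunc d (g.ut (d+1) u)) = _
      rw [ih u]

def UT.enc {A C : Type} (h0 : A → C) (h : C × Multiset (A × C) → C) :
    (d : ℕ) → UT A d → C
  | 0, t => h0 t
  | d+1, t => h (UT.enc h0 h d (UT.trunc d t), t.2.map fun p => (p.1, UT.enc h0 h d p.2))

lemma wl_eq_enc {V A C : Type} (g : FinGraph V A)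
    (h0 : A → C) (h : C × Multiset (A × C) → C) : ∀ (d : ℕ) (v : V),
    g.wl h0 h d v = UT.enc h0 h d (g.ut d v) := by
  intro d
  induction d with
  | zero => intro v; rfl
  | succ d ih =>
    intro v
    show h _ = h _
    congr 1
    refine Prod.ext ?_ ?_
    · show g.wl h0 h d v = UT.enc h0 h d (UT.trunc d (g.ut (d+1) v))
      rw [trunc_ut, ih]
    · show Multiset.map _ (g.nbr v).val = Multiset.map _ (Multiset.map _ (g.nbr v).val)
      rw [Multiset.map_map]
      exact Multiset.map_congr rfl fun u _ => by
        show (g.eattr v u, g.wl h0 h d u) = (g.eattr v u, UT.enc h0 h d (g.ut d u))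
        rw [ih u]

lemma enc_inj {A C : Type} (h0 : A → C) (h : C × Multiset (A × C) → C)
    (h0inj : Function.Injective h0) (hinj : Function.Injective h) :
    ∀ d : ℕ, Function.Injective (UT.enc h0 h d) := by
  intro d
  induction d with
  | zero => exact h0inj
  | succ d ih =>
    intro t1 t2 het
    have hp := hinj het
    have h1 : UT.enc h0 h d (UT.trunc d t1) = UT.enc h0 h d (UT.trunc d t2) :=
      congrArg Prod.fst hp
    have h2 : Multiset.map (fun p : A × UT A d => (p.1, UT.enc h0 h d p.2)) t1.2
        = Multiset.map (fun p : A × UT A d => (p.1, UT.enc h0 h d p.2)) t2.2 :=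
      congrArg Prod.snd hp
    have hfst : t1.1 = t2.1 := UT.trunc_fst d t1 t2 (ih h1)
    have hsnd : t1.2 = t2.2 := by
      refine Multiset.map_injective ?_ h2
      intro p q hpq
      have e1 : p.1 = q.1 := congrArg (Prod.fst : A × C → A) hpq
      have e2 : UT.enc h0 h d p.2 = UT.enc h0 h d q.2 := congrArg (Prod.snd : A × C → C) hpq
      exact Prod.ext e1 (ih e2)
    exact Prod.ext hfst hsnd

lemma dunion_ut_inl {V1 V2 A : Type} [Inhabited A]
    (g1 : FinGraph V1 A) (g2 : FinGraph V2 A) : ∀ (d : ℕ) (v : V1),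
    (g1.dunion g2).ut d (Sum.inl v) = g1.ut d v := by
  intro d
  induction d with
  | zero => intro v; rfl
  | succ d ih =>
    intro v
    show ((g1.dunion g2).attr (Sum.inl v), _) = (g1.attr v, _)
    refine Prod.ext rfl ?_
    show Multiset.map _ (((g1.nbr v).map ⟨Sum.inl, Sum.inl_injective⟩).val) = _
    rw [Finset.map_val, Multiset.map_map]
    exact Multiset.map_congr rfl fun u _ => by
      show ((g1.dunion g2).eattr (Sum.inl v) (Sum.inl u), (g1.dunion g2).ut d (Sum.inl u))
        = (g1.eattr v u, g1.ut d u)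
      rw [ih u]; rfl

lemma dunion_ut_inr {V1 V2 A : Type} [Inhabited A]
    (g1 : FinGraph V1 A) (g2 : FinGraph V2 A) : ∀ (d : ℕ) (v : V2),
    (g1.dunion g2).ut d (Sum.inr v) = g2.ut d v := by
  intro d
  induction d with
  | zero => intro v; rfl
  | succ d ih =>
    intro v
    refine Prod.ext rfl ?_
    show Multiset.map _ (((g2.nbr v).map ⟨Sum.inr, Sum.inr_injective⟩).val) = _
    rw [Finset.map_val, Multiset.map_map]
    exact Multiset.map_congr rfl fun u _ => by
      show ((g1.dunion g2).eattr (Sum.inr v) (Sum.inr u), (g1.dunion g2).ut d (Sum.inr u))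
        = (g2.eattr v u, g2.ut d u)
      rw [ih u]; rfl

/-- Stability of the `ut`-partition at step `j`. -/
def FinGraph.Stab {V A : Type} (g : FinGraph V A) (j : ℕ) : Prop :=
  ∀ u v : V, g.ut j u = g.ut j v → g.ut (j+1) u = g.ut (j+1) v

lemma ut_down {V A : Type} (g : FinGraph V A) (j : ℕ) {u v : V}
    (h : g.ut (j+1) u = g.ut (j+1) v) : g.ut j u = g.ut j v := by
  rw [← trunc_ut g j u, ← trunc_ut g j v, h]

lemma ut_attr_eq {V A : Type} (g : FinGraph V A) (j : ℕ) {u v : V}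
    (h : g.ut (j+1) u = g.ut (j+1) v) : g.attr u = g.attr v :=
  congrArg (Prod.fst : A × Multiset (A × UT A j) → A) h

lemma ut_nbr_eq {V A : Type} (g : FinGraph V A) (j : ℕ) {u v : V}
    (h : g.ut (j+1) u = g.ut (j+1) v) :
    Multiset.map (fun w => (g.eattr u w, g.ut j w)) (g.nbr u).val
      = Multiset.map (fun w => (g.eattr v w, g.ut j w)) (g.nbr v).val :=
  congrArg (Prod.snd : A × Multiset (A × UT A j) → Multiset (A × UT A j)) h

lemma stab_succ {V A : Type} [Nonempty V] (g : FinGraph V A) (j : ℕ)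
    (hst : g.Stab j) : g.Stab (j+1) := by
  classical
  intro u v huv
  -- define lifting function
  set φ : UT A j → UT A (j+1) := fun t =>
    if hd : ∃ w, g.ut j w = t then g.ut (j+1) hd.choose
    else g.ut (j+1) (Classical.arbitrary V) with hφ
  have hφw : ∀ w : V, φ (g.ut j w) = g.ut (j+1) w := by
    intro w
    have hd : ∃ w', g.ut j w' = g.ut j w := ⟨w, rfl⟩
    rw [hφ]
    simp only [dif_pos hd]
    exact hst _ _ hd.choose_spec
  show (g.attr u, _) = (g.attr v, _)
  refine Prod.ext (ut_attr_eq g j huv) ?_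
  show Multiset.map (fun w => (g.eattr u w, g.ut (j+1) w)) (g.nbr u).val
    = Multiset.map (fun w => (g.eattr v w, g.ut (j+1) w)) (g.nbr v).val
  have key : ∀ (z : V), Multiset.map (fun w => (g.eattr z w, g.ut (j+1) w)) (g.nbr z).val
      = Multiset.map (fun p : A × UT A j => (p.1, φ p.2))
          (Multiset.map (fun w => (g.eattr z w, g.ut j w)) (g.nbr z).val) := by
    intro z
    rw [Multiset.map_map]
    exact Multiset.map_congr rfl fun w _ => by
      show (g.eattr z w, g.ut (j+1) w) = (g.eattr z w, φ (g.ut j w))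
      rw [hφw w]
  rw [key u, key v, ut_nbr_eq g j huv]

lemma stab_add {V A : Type} [Nonempty V] (g : FinGraph V A) (j : ℕ)
    (hst : g.Stab j) : ∀ k, g.Stab (j+k) := by
  intro k
  induction k with
  | zero => exact hst
  | succ k ih => exact stab_succ g (j+k) ih

lemma ut_propagate {V A : Type} [Nonempty V] (g : FinGraph V A) (j : ℕ)
    (hst : g.Stab j) {u v : V} (huv : g.ut j u = g.ut j v) :
    ∀ k, g.ut (j+k) u = g.ut (j+k) v := by
  intro k
  induction k with
  | zero => exact huv
  | succ k ih => exact stab_add g j hst k u v ih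

lemma ut_down_le {V A : Type} (g : FinGraph V A) {d m : ℕ} (hdm : d ≤ m) {u v : V}
    (h : g.ut m u = g.ut m v) : g.ut d u = g.ut d v := by
  obtain ⟨k, rfl⟩ := Nat.exists_eq_add_of_le hdm
  induction k with
  | zero => exact h
  | succ k ih => exact ih (Nat.le_add_right d k) (ut_down g (d+k) h)

open Finset in
lemma exists_stab {V A : Type} [Fintype V] [Nonempty V] (g : FinGraph V A)
    (M : ℕ) (hM : Fintype.card V ≤ M) : ∃ j < M, g.Stab j := by
  classical
  by_contra hcon
  push_neg at hcon
  -- number of classes at step j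
  set n : ℕ → ℕ := fun j => ((Finset.univ.image (g.ut j)).card) with hn
  have himg : ∀ j : ℕ, Finset.univ.image (g.ut j)
      = (Finset.univ.image (g.ut (j+1))).image (UT.trunc j) := by
    intro j
    rw [Finset.image_image]
    exact Finset.image_congr fun v _ => (trunc_ut g j v).symm
  have hmono : ∀ j, n j ≤ n (j+1) := fun j => by
    rw [hn]; simp only [himg j]; exact Finset.card_image_le
  have hstrict : ∀ j, ¬ g.Stab j → n j < n (j+1) := by
    intro j hns
    refine lt_of_le_of_ne (hmono j) fun heq => hns ?_
    intro u v huv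
    have hinj : Set.InjOn (UT.trunc j) (↑(Finset.univ.image (g.ut (j+1))) : Set (UT A (j+1))) := by
      rw [← Finset.card_image_iff, ← himg j]
      exact heq
    have h1 : (UT.trunc j) (g.ut (j+1) u) = (UT.trunc j) (g.ut (j+1) v) := by
      rw [trunc_ut, trunc_ut]; exact huv
    exact hinj (Finset.mem_coe.mpr (Finset.mem_image_of_mem _ (Finset.mem_univ u)))
      (Finset.mem_coe.mpr (Finset.mem_image_of_mem _ (Finset.mem_univ v))) h1
  have hlow : ∀ j ≤ M, j + 1 ≤ n j := by
    intro j
    induction j with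
    | zero =>
      intro _
      have : (Finset.univ.image (g.ut 0)).Nonempty :=
        ⟨g.ut 0 (Classical.arbitrary V), Finset.mem_image_of_mem _ (Finset.mem_univ _)⟩
      exact Finset.Nonempty.card_pos this
    | succ j ih =>
      intro hj
      have h1 : n j < n (j+1) := hstrict j (hcon j (Nat.lt_of_succ_le hj))
      have h2 := ih (Nat.le_of_succ_le hj)
      omega
  have hub : n M ≤ Fintype.card V := by
    calc n M ≤ Finset.univ.card := Finset.card_image_le
    _ = Fintype.card V := Finset.card_univ
  have := hlow M le_rfl
  omega

/-- The stable 1-WL color of a node determines its infinite unfolding tree: for nodes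
`x`, `y` of graphs with at most `N` nodes each, the stable WL colors (computed on the
disjoint union, stabilized after `2N` iterations) are equal iff the unfolding trees
agree at every depth. -/
theorem stable_wl_eq_iff_ut_eq {V1 V2 A C : Type} [Fintype V1] [Fintype V2] [Inhabited A]
    (g1 : FinGraph V1 A) (g2 : FinGraph V2 A)
    (hg1 : g1.Undirected) (hg2 : g2.Undirected)
    (N : ℕ) (hN1 : Fintype.card V1 ≤ N) (hN2 : Fintype.card V2 ≤ N)
    (h0 : A → C) (h : C × Multiset (A × C) → C)
    (h0inj : Function.Injective h0) (hinj : Function.Injective h)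
    (x : V1) (y : V2) :
    (g1.dunion g2).wl h0 h (2*N) (Sum.inl x) = (g1.dunion g2).wl h0 h (2*N) (Sum.inr y)
      ↔ ∀ d : ℕ, g1.ut d x = g2.ut d y := by
  classical
  set G := g1.dunion g2 with hG
  haveI : Nonempty (V1 ⊕ V2) := ⟨Sum.inl x⟩
  have hcard : Fintype.card (V1 ⊕ V2) ≤ 2*N := by
    rw [Fintype.card_sum]; omega
  constructor
  · intro hwl d
    have hut : G.ut (2*N) (Sum.inl x) = G.ut (2*N) (Sum.inr y) := by
      refine enc_inj h0 h h0inj hinj (2*N) ?_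
      rw [← wl_eq_enc, ← wl_eq_enc]
      exact hwl
    obtain ⟨j, hj, hst⟩ := exists_stab G (2*N) hcard
    have hj' : G.ut j (Sum.inl x) = G.ut j (Sum.inr y) := ut_down_le G hj.le hut
    have hGd : G.ut d (Sum.inl x) = G.ut d (Sum.inr y) := by
      rcases le_or_gt d (2*N) with hle | hgt
      · exact ut_down_le G hle hut
      · have hd : d = j + (d - j) := by omega
        rw [hd]
        exact ut_propagate G j hst hj' (d - j)
    rw [← dunion_ut_inl g1 g2 d x, ← dunion_ut_inr g1 g2 d y]
    exact hGd
  · intro hutall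
    rw [wl_eq_enc, wl_eq_enc]
    congr 1
    rw [dunion_ut_inl g1 g2 (2*N) x, dunion_ut_inr g1 g2 (2*N) y]
    exact hutall (2*N)
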